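/- arXiv:2406.09879 — 4 statements merged into one kernel-verified Lean document; each statement's English description precedes it below -/
import Mathlib

section
/- Let φ : A → B be a ring homomorphism between reduced commutative Noetherian rings making B a finitely generated A-module (a module-finite algebra), and suppose that the induced map Spec B → Spec A on prime spectra is open and surjective. Then a finitely generated B-module M is torsion-free as a B-module if and only if M, viewed as an A-module by restriction of scalars along φ, is torsion-free as an A-module. -/
/-!
In a reduced ring the zero divisors are exactly the union of the minimal primes, and both
inclusions between `torsion A M` and `torsion B M` come down to comparing minimal primes.
If `Spec B → Spec A` is open, the open image of `D(t)` contains every generalization of each of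
its points; this forces minimal primes of `B` to contract to minimal primes of `A`, so
non-zero-divisors of `A` stay non-zero-divisors of `B`. Conversely, if the annihilator of `m`
in `A` consists of zero divisors, prime avoidance puts it inside a minimal prime `p` of `A`;
lying over gives a prime of `B` above `p` containing the annihilator of `m` in `B`, and by
incomparability that prime is minimal, so it too consists of zero divisors.
-/

section MinimalPrimes

variable {R : Type*} [CommRing R]

theorem exists_mem_minimalPrimes_of_notMem_nonZeroDivisors [IsReduced R] {x : R}
    (hx : x ∉ nonZeroDivisors R) : ∃ p ∈ minimalPrimes R, x ∈ p := by
  obtain ⟨y, hxy, hy⟩ : ∃ y, x * y = 0 ∧ y ≠ 0 := by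
    simpa [mem_nonZeroDivisors_iff_right, mul_comm] using hx
  have hx : x ∈ ⋃ p ∈ minimalPrimes R, (p : Set R) := by
    rw [minimalPrimes, Ideal.iUnion_minimalPrimes, Ideal.radical_bot_of_isReduced]
    exact ⟨y, by simpa using hy, by simpa using hxy⟩
  simpa using hx

theorem Ideal.exists_mem_minimalPrimes_le_of_disjoint_nonZeroDivisors [IsReduced R]
    [IsNoetherianRing R] {I : Ideal R} (hI : Disjoint (I : Set R) (nonZeroDivisors R)) :
    ∃ p ∈ minimalPrimes R, I ≤ p := by
  refine (Ideal.subset_union_prime_finite (minimalPrimes.finite_of_isNoetherianRing R) ⊥ ⊥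
    (fun p hp _ _ ↦ hp.isPrime)).mp fun x hx ↦ ?_
  obtain ⟨p, hp, hxp⟩ := exists_mem_minimalPrimes_of_notMem_nonZeroDivisors
    (Set.disjoint_left.mp hI hx)
  exact Set.mem_biUnion hp hxp

theorem Ideal.mem_minimalPrimes_of_comap_mem_minimalPrimes {S : Type*} [CommRing S] [Algebra R S]
    [Algebra.IsIntegral R S] {Q : Ideal S} [Q.IsPrime]
    (hQ : Q.comap (algebraMap R S) ∈ minimalPrimes R) : Q ∈ minimalPrimes S := by
  refine ⟨⟨‹_›, bot_le⟩, fun q ⟨hq, _⟩ hqQ ↦ ?_⟩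
  by_contra hQq
  exact (Ideal.IsIntegral.comap_lt_comap (R := R) (hqQ.lt_of_not_ge hQq)).not_ge
    (hQ.2 ⟨Ideal.IsPrime.comap _, bot_le⟩ (Ideal.comap_mono hqQ))

end MinimalPrimes

section IsOpenMap

variable {A B : Type*} [CommRing A] [CommRing B] [Algebra A B]

theorem algebraMap_mul_ne_zero_of_isOpenMap
    (hopen : IsOpenMap (PrimeSpectrum.comap (algebraMap A B)))
    {p : Ideal A} [p.IsPrime] {q : Ideal B} [q.IsPrime]
    (hpq : p ≤ q.comap (algebraMap A B)) {a : A} (ha : a ∉ p) {t : B} (ht : t ∉ q) :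
    algebraMap A B a * t ≠ 0 := by
  intro h0
  have hgen :
      (⟨p, ‹_›⟩ : PrimeSpectrum A) ⤳ PrimeSpectrum.comap (algebraMap A B) ⟨q, ‹_›⟩ :=
    (PrimeSpectrum.le_iff_specializes _ _).mp hpq
  -- the open image of `D(t)` contains `q ∩ A`, hence its generalization `p`
  obtain ⟨r, htr, hr⟩ :=
    hgen.mem_open (hopen _ (PrimeSpectrum.basicOpen t).isOpen) ⟨⟨q, ‹_›⟩, ht, rfl⟩
  rcases r.isPrime.mem_or_mem (h0 ▸ r.asIdeal.zero_mem) with h | h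
  · have h : a ∈ (PrimeSpectrum.comap (algebraMap A B) r).asIdeal := h
    rw [hr] at h
    exact ha h
  · exact htr h

theorem exists_le_comap_le_of_isOpenMap
    (hopen : IsOpenMap (PrimeSpectrum.comap (algebraMap A B)))
    {p : Ideal A} [p.IsPrime] {q : Ideal B} [q.IsPrime]
    (hpq : p ≤ q.comap (algebraMap A B)) :
    ∃ q' : Ideal B, q'.IsPrime ∧ q' ≤ q ∧ q'.comap (algebraMap A B) ≤ p := by
  set S := p.primeCompl.map (algebraMap A B) ⊔ q.primeCompl
  have hS : Disjoint ((⊥ : Ideal B) : Set B) S := Set.disjoint_left.mpr fun x hx hxS ↦ by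
    obtain ⟨-, ⟨a, ha, rfl⟩, t, ht, hat⟩ := Submonoid.mem_sup.mp hxS
    exact algebraMap_mul_ne_zero_of_isOpenMap hopen hpq ha ht (hat.trans (by simpa using hx))
  obtain ⟨q', hq', -, hdisj⟩ := Ideal.exists_le_prime_disjoint ⊥ S hS
  refine ⟨q', hq', fun x hx ↦ ?_, fun a ha ↦ ?_⟩
  · by_contra hxq
    exact Set.disjoint_left.mp hdisj hx (le_sup_right (a := p.primeCompl.map (algebraMap A B)) hxq)
  · by_contra hap
    exact Set.disjoint_left.mp hdisj ha
      (le_sup_left (b := q.primeCompl) (Submonoid.mem_map_of_mem _ hap))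

theorem comap_mem_minimalPrimes_of_isOpenMap
    (hopen : IsOpenMap (PrimeSpectrum.comap (algebraMap A B)))
    {q : Ideal B} (hq : q ∈ minimalPrimes B) :
    q.comap (algebraMap A B) ∈ minimalPrimes A := by
  have := hq.isPrime
  obtain ⟨p, hp, hpq⟩ := Ideal.exists_minimalPrimes_le (bot_le (a := q.comap (algebraMap A B)))
  have := hp.isPrime
  obtain ⟨q', hq', hq'q, hq'p⟩ := exists_le_comap_le_of_isOpenMap hopen hpq
  obtain rfl : q' = q := le_antisymm hq'q (hq.2 ⟨hq', bot_le⟩ hq'q)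
  exact le_antisymm hq'p hpq ▸ hp

theorem algebraMap_mem_nonZeroDivisors_of_isOpenMap
    (hopen : IsOpenMap (PrimeSpectrum.comap (algebraMap A B))) [IsReduced B] {a : A}
    (ha : a ∈ nonZeroDivisors A) : algebraMap A B a ∈ nonZeroDivisors B := by
  by_contra h
  obtain ⟨q, hq, haq⟩ := exists_mem_minimalPrimes_of_notMem_nonZeroDivisors h
  exact notMem_nonZeroDivisors_of_mem_mem_minimalPrimes (Ideal.mem_comap.mpr haq)
    (comap_mem_minimalPrimes_of_isOpenMap hopen hq) ha

end IsOpenMap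

section Torsion

variable {A B M : Type*} [CommRing A] [CommRing B] [Algebra A B] [AddCommGroup M] [Module A M]
  [Module B M] [IsScalarTower A B M]

theorem Ideal.comap_torsionOf (m : M) :
    (Ideal.torsionOf B M m).comap (algebraMap A B) = Ideal.torsionOf A M m := by
  ext a
  simp [Ideal.mem_torsionOf_iff, algebraMap_smul]

namespace Submodule

theorem torsion_le_restrictScalars_torsion
    (h : ∀ a ∈ nonZeroDivisors A, algebraMap A B a ∈ nonZeroDivisors B) :
    torsion A M ≤ (torsion B M).restrictScalars A := by
  rintro m ⟨⟨a, ha⟩, ham⟩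
  exact ⟨⟨algebraMap A B a, h a ha⟩, by simpa [algebraMap_smul] using ham⟩

theorem restrictScalars_torsion_le_torsion [IsReduced A] [IsNoetherianRing A]
    [Algebra.IsIntegral A B] : (torsion B M).restrictScalars A ≤ torsion A M := by
  intro m hm
  by_contra hmA
  obtain ⟨⟨b, hb⟩, hbm⟩ := hm
  obtain ⟨p, hp, hmp⟩ := Ideal.exists_mem_minimalPrimes_le_of_disjoint_nonZeroDivisors
    (I := Ideal.torsionOf A M m) (Set.disjoint_left.mpr fun a ham ha ↦ hmA ⟨⟨a, ha⟩, ham⟩)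
  have := hp.isPrime
  obtain ⟨Q, hmQ, hQ, hQp⟩ := Ideal.exists_ideal_over_prime_of_isIntegral p
    (Ideal.torsionOf B M m) (Ideal.comap_torsionOf (A := A) (B := B) m ▸ hmp)
  exact notMem_nonZeroDivisors_of_mem_mem_minimalPrimes (hmQ hbm)
    (Ideal.mem_minimalPrimes_of_comap_mem_minimalPrimes (hQp ▸ hp)) hb

end Submodule

end Torsion

theorem torsionFree_iff_torsionFree_restrictScalars_general
    (A B : Type*) [CommRing A] [CommRing B] [IsReduced A] [IsReduced B]
    [IsNoetherianRing A] [Algebra A B] [Module.Finite A B]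
    (hopen : IsOpenMap (PrimeSpectrum.comap (algebraMap A B)))
    (M : Type*) [AddCommGroup M] [Module B M] [Module A M] [IsScalarTower A B M] :
    Submodule.torsion B M = ⊥ ↔ Submodule.torsion A M = ⊥ := by
  have htorsion : (Submodule.torsion B M).restrictScalars A = Submodule.torsion A M :=
    le_antisymm Submodule.restrictScalars_torsion_le_torsion
      (Submodule.torsion_le_restrictScalars_torsion fun _ ↦
        algebraMap_mem_nonZeroDivisors_of_isOpenMap hopen)
  rw [← htorsion, Submodule.restrictScalars_eq_bot_iff]

/-- Let `A → B` be a module-finite algebra map between reduced commutative Noetherian rings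
such that the induced map `Spec B → Spec A` is open and surjective. A finitely generated
`B`-module `M` is torsion-free over `B` iff it is torsion-free over `A`
(via restriction of scalars). -/
theorem torsionFree_iff_torsionFree_restrictScalars
    (A B : Type*) [CommRing A] [CommRing B] [IsReduced A] [IsReduced B]
    [IsNoetherianRing A] [IsNoetherianRing B] [Algebra A B] [Module.Finite A B]
    (hopen : IsOpenMap (PrimeSpectrum.comap (algebraMap A B)))
    (hsurj : Function.Surjective (PrimeSpectrum.comap (algebraMap A B)))
    (M : Type*) [AddCommGroup M] [Module B M] [Module A M] [IsScalarTower A B M]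
    [Module.Finite B M] :
    Submodule.torsion B M = ⊥ ↔ Submodule.torsion A M = ⊥ :=
  torsionFree_iff_torsionFree_restrictScalars_general A B hopen M
end

section
/- Let A be a reduced commutative Noetherian ring, let B be a commutative Noetherian A-algebra that is flat as an A-module, and let N be a finitely generated torsion-free A-module. Then B ⊗_A N is a torsion-free B-module. -/
/-!
A torsion-free module `N` embeds into its localization `S⁻¹N` at the non-zero-divisors `S` of `A`.
For `A` reduced and Noetherian, `S⁻¹A` is a finite product of fields (its primes are the minimal
primes of `A`), so `S⁻¹N` is projective over `S⁻¹A`, hence flat over `A`. Since `B` is flat,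
`B ⊗ N` embeds into `B ⊗ S⁻¹N`, which is flat and therefore torsion-free over `B`.
-/

open scoped TensorProduct nonZeroDivisors

theorem Submodule.torsion_eq_bot_iff_isTorsionFree {R M : Type*} [CommRing R] [AddCommGroup M]
    [Module R M] : torsion R M = ⊥ ↔ Module.IsTorsionFree R M := by
  simp only [eq_bot_iff, SetLike.le_def, mem_torsion_iff, mem_bot, forall_exists_index,
    Subtype.forall, Submonoid.mk_smul]
  refine ⟨fun h ↦ ⟨fun r hr ↦ isSMulRegular_iff_right_eq_zero_of_smul.mpr fun x hx ↦ ?_⟩,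
    fun h x a ha hx ↦ ?_⟩
  · exact h r (isRegular_iff_mem_nonZeroDivisors.mp hr) hx
  · exact (isRegular_iff_mem_nonZeroDivisors.mpr ha).isSMulRegular.right_eq_zero_of_smul hx

/-- In a reduced ring the zero divisors are the union of the minimal primes, so prime avoidance
puts `p` inside one of them. -/
theorem Ideal.mem_minimalPrimes_of_disjoint_nonZeroDivisors {R : Type*} [CommRing R]
    [IsReduced R] (hfin : (minimalPrimes R).Finite) {p : Ideal R} (hp : p.IsPrime)
    (hdisj : Disjoint (R⁰ : Set R) p) : p ∈ minimalPrimes R := by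
  have hsub : (p : Set R) ⊆ ⋃ q ∈ minimalPrimes R, q := by
    intro x hx
    have hx' : x ∉ R⁰ := hdisj.notMem_of_mem_right hx
    rw [minimalPrimes, Ideal.iUnion_minimalPrimes, radical_bot_of_isReduced]
    simpa [mem_nonZeroDivisors_iff_right, mul_comm x, and_comm] using hx'
  obtain ⟨q, hq, hpq⟩ :=
    (subset_union_prime_finite hfin (f := id) ⊥ ⊥ fun q hq _ _ ↦ hq.1.1).mp hsub
  rwa [le_antisymm hpq (hq.2 ⟨hp, bot_le⟩ hpq)]

theorem IsLocalization.krullDimLE_zero_of_nonZeroDivisors {R : Type*} [CommRing R]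
    [IsReduced R] (hfin : (minimalPrimes R).Finite) (K : Type*) [CommRing K] [Algebra R K]
    [IsLocalization R⁰ K] : Ring.KrullDimLE 0 K := by
  refine .mk₀ fun P hP ↦ ?_
  obtain ⟨M, hM, hPM⟩ := P.exists_le_maximal hP.ne_top
  obtain ⟨hMprime, hMdisj⟩ := (isPrime_iff_isPrime_disjoint R⁰ K M).mp hM.isPrime
  have hMmin := Ideal.mem_minimalPrimes_of_disjoint_nonZeroDivisors hfin hMprime hMdisj
  have hMP : M ≤ P := (under_le_under_iff R⁰ K).mp <|
    hMmin.2 ⟨((isPrime_iff_isPrime_disjoint R⁰ K P).mp hP).1, bot_le⟩ (Ideal.comap_mono hPM)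
  rwa [le_antisymm hPM hMP]

theorem FractionRing.isSemisimpleRing (R : Type*) [CommRing R] [IsReduced R]
    [IsNoetherianRing R] : IsSemisimpleRing (FractionRing R) :=
  have := IsLocalization.isNoetherianRing R⁰ (FractionRing R) ‹_›
  have := IsLocalization.krullDimLE_zero_of_nonZeroDivisors
    (minimalPrimes.finite_of_isNoetherianRing R) (FractionRing R)
  have := IsNoetherianRing.isArtinianRing_of_krullDimLE_zero (R := FractionRing R)
  IsArtinianRing.isSemisimpleRing_of_isReduced _

instance LocalizedModule.flat_nonZeroDivisors (R M : Type*) [CommRing R] [IsReduced R]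
    [IsNoetherianRing R] [AddCommGroup M] [Module R M] :
    Module.Flat R (LocalizedModule R⁰ M) :=
  have := FractionRing.isSemisimpleRing R
  have := Module.projective_of_isSemisimpleRing (FractionRing R) (LocalizedModule R⁰ M)
  .trans R (FractionRing R) _

theorem LocalizedModule.mkLinearMap_injective_of_torsion_eq_bot {R M : Type*} [CommRing R]
    [AddCommGroup M] [Module R M] (h : Submodule.torsion R M = ⊥) :
    Function.Injective (mkLinearMap R⁰ M) := by
  have := Submodule.torsion_eq_bot_iff_isTorsionFree.mp h
  exact (IsLocalizedModule.injective_iff_isRegular R⁰ _).mpr fun c ↦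
    (isRegular_iff_mem_nonZeroDivisors.mpr c.2).isSMulRegular

theorem torsionFree_baseChange_of_flat_general
    (A B : Type*) [CommRing A] [IsReduced A] [IsNoetherianRing A]
    [CommRing B] [Algebra A B] [Module.Flat A B]
    (N : Type*) [AddCommGroup N] [Module A N]
    (hN : Submodule.torsion A N = ⊥) :
    Submodule.torsion B (B ⊗[A] N) = ⊥ := by
  let ι := LocalizedModule.mkLinearMap A⁰ N
  have hι : Function.Injective (ι.baseChange B) :=
    Module.Flat.lTensor_preserves_injective_linearMap ι
      (LocalizedModule.mkLinearMap_injective_of_torsion_eq_bot hN)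
  have : Module.Flat B (B ⊗[A] LocalizedModule A⁰ N) := inferInstance
  exact Submodule.torsion_eq_bot_iff_isTorsionFree.mpr <|
    hι.moduleIsTorsionFree (R := B) _ (map_smul _)

/-- For a reduced commutative Noetherian ring `A`, a commutative Noetherian `A`-algebra `B`
that is flat as an `A`-module, and a finitely generated torsion-free `A`-module `N`,
the base change `B ⊗[A] N` is a torsion-free `B`-module. -/
theorem torsionFree_baseChange_of_flat
    (A B : Type*) [CommRing A] [IsReduced A] [IsNoetherianRing A]
    [CommRing B] [IsNoetherianRing B] [Algebra A B] [Module.Flat A B]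
    (N : Type*) [AddCommGroup N] [Module A N] [Module.Finite A N]
    (hN : Submodule.torsion A N = ⊥) :
    Submodule.torsion B (B ⊗[A] N) = ⊥ :=
  torsionFree_baseChange_of_flat_general A B N hN
end

section
/- Let (A, 𝔪) be a reduced commutative Noetherian local ring, let (B, 𝔫) be a commutative Noetherian local ring, let φ : A → B be a local ring homomorphism making B a flat A-module, and let M be a finitely generated B-module. Then M is flat as an A-module if and only if for every finitely generated torsion-free A-module N, the A-module N ⊗_A M is torsion-free over A. -/
open TensorProduct Submodule

universe u

/-!
If `M` is flat, multiplication by a non-zero-divisor stays injective on `N ⊗[A] M` because it is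
injective on `N`. Conversely, by the ideal criterion it suffices that the kernel of
`I ⊗[A] M → M` vanishes, and since `I ⊗[A] M` is torsion-free it suffices that this kernel is
torsion, i.e. dies in `I ⊗[A] (Q ⊗[A] M)` for the total ring of fractions `Q` of `A`. As `A` is
reduced and Noetherian, every maximal ideal of `Q` is an associated, hence minimal, prime; so `Q`
is a reduced Artinian ring, i.e. semisimple, and `Q ⊗[A] M` is flat over `Q`, hence over `A`.
-/

theorem IsLocalizedModule.lTensor {R : Type*} [CommSemiring R] (S : Submonoid R) (N : Type*)
    {M M' : Type*} [AddCommMonoid N] [Module R N] [AddCommMonoid M] [Module R M]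
    [AddCommMonoid M'] [Module R M'] (g : M →ₗ[R] M') [IsLocalizedModule S g] :
    IsLocalizedModule S (g.lTensor N) := by
  have := IsLocalizedModule.of_linearEquiv S (AlgebraTensorModule.rTensor R N g)
    (TensorProduct.comm R M' N)
  have := IsLocalizedModule.of_linearEquiv_right S
    ((TensorProduct.comm R M' N).toLinearMap ∘ₗ AlgebraTensorModule.rTensor R N g)
    (TensorProduct.comm R N M)
  convert this using 1
  ext n m
  rfl

theorem Ideal.mem_minimalPrimes_of_isAssociatedPrime {R : Type*} [CommSemiring R] [IsReduced R]
    {p : Ideal R} (hp : IsAssociatedPrime p R) : p ∈ minimalPrimes R := by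
  obtain ⟨hp_prime, x, rfl⟩ := hp
  have hx : x ≠ 0 := by
    rintro rfl
    exact hp_prime.ne_top (by simp)
  obtain ⟨q, hq, hxq⟩ : ∃ q ∈ minimalPrimes R, x ∉ q := by
    have : x ∉ sInf (minimalPrimes R) := by
      rwa [minimalPrimes, Ideal.sInf_minimalPrimes, ← Ideal.zero_eq_bot, ← nilradical,
        nilradical_eq_zero, Submodule.zero_eq_bot, Submodule.mem_bot]
    simpa only [Ideal.mem_sInf, not_forall, exists_prop] using this
  have hle : (colon ⊥ {x} : Ideal R).radical ≤ q := by
    refine hq.1.1.radical_le_iff.mpr fun r hr => ?_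
    rw [mem_colon_singleton, mem_bot, smul_eq_mul] at hr
    exact (hq.1.1.mem_or_mem (hr ▸ q.zero_mem)).resolve_right hxq
  rwa [le_antisymm hle (hq.2 ⟨hp_prime, bot_le⟩ hle)]

section

variable {R : Type*} [CommRing R]

theorem Ring.krullDimLE_zero_of_isFractionRing_self [IsReduced R] [IsNoetherianRing R]
    [IsFractionRing R R] : Ring.KrullDimLE 0 R := by
  refine Ring.krullDimLE_zero_iff_forall_minimalPrimes_isMaximal.mpr fun p hp => ?_
  obtain ⟨m, hm, hpm⟩ := Ideal.exists_le_maximal p hp.1.1.ne_top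
  have hm_min := Ideal.mem_minimalPrimes_of_isAssociatedPrime
    (Ideal.IsMaximal.mem_associatedPrimes_of_isFractionRing R m)
  rwa [le_antisymm hpm (hm_min.2 ⟨hp.1.1, bot_le⟩ hpm)]

instance FractionRing.isSemisimpleRing_s5 [IsReduced R] [IsNoetherianRing R] :
    IsSemisimpleRing (FractionRing R) :=
  have : IsFractionRing (FractionRing R) (FractionRing R) := IsFractionRing.idem R _
  have : IsNoetherianRing (FractionRing R) :=
    IsLocalization.isNoetherianRing (nonZeroDivisors R) _ inferInstance
  have : Ring.KrullDimLE 0 (FractionRing R) := Ring.krullDimLE_zero_of_isFractionRing_self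
  have : IsArtinianRing (FractionRing R) :=
    isArtinianRing_iff_isNoetherianRing_krullDimLE_zero.mpr ⟨inferInstance, inferInstance⟩
  IsArtinianRing.isSemisimpleRing_of_isReduced _

theorem Module.Flat.fractionRing_tensorProduct [IsReduced R] [IsNoetherianRing R]
    (M : Type*) [AddCommGroup M] [Module R M] : Module.Flat R (FractionRing R ⊗[R] M) :=
  have := Module.projective_of_isSemisimpleRing (FractionRing R) (FractionRing R ⊗[R] M)
  Module.Flat.trans R (FractionRing R) _

variable {N P : Type*} [AddCommGroup N] [Module R N] [AddCommGroup P] [Module R P]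
  (M : Type*) [AddCommGroup M] [Module R M]

theorem LinearMap.ker_rTensor_le_torsion [IsReduced R] [IsNoetherianRing R]
    {f : N →ₗ[R] P} (hf : Function.Injective f) :
    LinearMap.ker (f.rTensor M) ≤ torsion R (N ⊗[R] M) := by
  intro x hx
  let g := TensorProduct.mk R (FractionRing R) M 1
  have := Module.Flat.fractionRing_tensorProduct (R := R) M
  have hgx : g.lTensor N x = 0 := by
    apply Module.Flat.rTensor_preserves_injective_linearMap _ hf
    rw [map_zero, ← LinearMap.comp_apply, LinearMap.rTensor_comp_lTensor,
      ← LinearMap.lTensor_comp_rTensor, LinearMap.comp_apply, LinearMap.mem_ker.mp hx, map_zero]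
  have := IsLocalizedModule.lTensor (nonZeroDivisors R) N g
  exact (IsLocalizedModule.eq_zero_iff (nonZeroDivisors R) _).mp hgx

theorem Submodule.torsion_rTensor_eq_bot [Module.Flat R M] (hN : torsion R N = ⊥) :
    torsion R (N ⊗[R] M) = ⊥ := by
  refine eq_bot_iff.mpr fun x ⟨s, hs⟩ => ?_
  have hN_reg : Function.Injective (LinearMap.lsmul R N s) :=
    (injective_iff_map_eq_zero _).mpr fun n hn => (mem_bot R).mp (hN ▸ ⟨s, hn⟩)
  have hrTensor : (LinearMap.lsmul R N s).rTensor M = LinearMap.lsmul R (N ⊗[R] M) s := by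
    ext n m
    simp [smul_tmul']
  refine (mem_bot R).mpr (Module.Flat.rTensor_preserves_injective_linearMap _ hN_reg ?_)
  rw [hrTensor, map_zero]
  exact hs

theorem Submodule.torsion_eq_bot_of_injective {f : N →ₗ[R] P} (hf : Function.Injective f)
    (hP : torsion R P = ⊥) : torsion R N = ⊥ := by
  refine eq_bot_iff.mpr fun x ⟨s, hs⟩ => ?_
  have : f x ∈ torsion R P :=
    ⟨s, by rw [Submonoid.smul_def, ← map_smul, ← Submonoid.smul_def, hs, map_zero]⟩
  rw [hP, mem_bot, ← map_zero f] at this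
  exact (mem_bot R).mpr (hf this)

end

theorem flat_iff_tensor_torsionFree_general
    (A : Type u) [CommRing A] [IsReduced A] [IsNoetherianRing A]
    (M : Type u) [AddCommGroup M] [Module A M] :
    Module.Flat A M ↔
      ∀ (N : Type u) [AddCommGroup N] [Module A N] [Module.Finite A N],
        Submodule.torsion A N = ⊥ → Submodule.torsion A (N ⊗[A] M) = ⊥ := by
  refine ⟨fun _ N _ _ _ hN => torsion_rTensor_eq_bot M hN, fun h => ?_⟩
  refine Module.Flat.iff_rTensor_injective'.mpr fun I => ?_
  have hI : torsion A I = ⊥ :=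
    torsion_eq_bot_of_injective I.injective_subtype Module.Flat.torsion_eq_bot
  rw [← LinearMap.ker_eq_bot, eq_bot_iff, ← h I hI]
  exact LinearMap.ker_rTensor_le_torsion M I.injective_subtype

/-- Let `(A, 𝔪)` be a reduced commutative Noetherian local ring, `(B, 𝔫)` a commutative
Noetherian local ring, `A → B` a local homomorphism making `B` flat over `A`, and `M` a
finitely generated `B`-module. Then `M` is flat over `A` iff for every finitely generated
torsion-free `A`-module `N`, the `A`-module `N ⊗[A] M` is torsion-free over `A`. -/
theorem flat_iff_tensor_torsionFree
    (A : Type u) [CommRing A] [IsReduced A] [IsNoetherianRing A] [IsLocalRing A]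
    (B : Type*) [CommRing B] [IsNoetherianRing B] [IsLocalRing B]
    [Algebra A B] [IsLocalHom (algebraMap A B)] [Module.Flat A B]
    (M : Type u) [AddCommGroup M] [Module B M] [Module A M] [IsScalarTower A B M]
    [Module.Finite B M] :
    Module.Flat A M ↔
      ∀ (N : Type u) [AddCommGroup N] [Module A N] [Module.Finite A N],
        Submodule.torsion A N = ⊥ → Submodule.torsion A (N ⊗[A] M) = ⊥ :=
  flat_iff_tensor_torsionFree_general A M
end

section
/- Let (A, 𝔪, k) be a reduced commutative Noetherian local ring and M an arbitrary A-module. If the A-module 𝔪 ⊗_A M is torsion-free over A, then the canonical map 𝔪 ⊗_A M → M (induced by the inclusion 𝔪 ⊆ A) is injective; equivalently, Tor₁^A(k, M) = 0. -/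
open scoped TensorProduct

/-!
The kernel of `𝔪 ⊗ M → M` is killed by `𝔪`, because `a • (b ⊗ m) = a ⊗ b • m`. If `𝔪` contains
a non-zero-divisor, the kernel is therefore torsion, hence zero. Otherwise `𝔪` consists of zero
divisors, so (`A` being Noetherian) it has a nonzero annihilator; since `A` is reduced and local
this forces `𝔪 = 0`, and then `𝔪 ⊗ M = 0`.
-/

theorem Ideal.mk_comp_lift_lsmul_subtype {R : Type*} [CommRing R] (I : Ideal R)
    (M : Type*) [AddCommGroup M] [Module R M] {a : R} (ha : a ∈ I) :
    TensorProduct.mk R I M ⟨a, ha⟩ ∘ₗ TensorProduct.lift ((LinearMap.lsmul R M).comp I.subtype) =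
      a • LinearMap.id := by
  refine TensorProduct.ext' fun b m => ?_
  simp only [LinearMap.comp_apply, TensorProduct.lift.tmul, Submodule.coe_subtype,
    LinearMap.lsmul_apply, TensorProduct.mk_apply, LinearMap.smul_apply, LinearMap.id_apply]
  rw [← TensorProduct.smul_tmul, TensorProduct.smul_tmul']
  congr 1
  exact Subtype.ext (mul_comm _ _)

theorem Ideal.smul_eq_zero_of_lift_lsmul_subtype_eq_zero {R : Type*} [CommRing R] (I : Ideal R)
    {M : Type*} [AddCommGroup M] [Module R M] {a : R} (ha : a ∈ I) {x : I ⊗[R] M}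
    (hx : TensorProduct.lift ((LinearMap.lsmul R M).comp I.subtype) x = 0) : a • x = 0 := by
  simpa [hx] using (LinearMap.congr_fun (I.mk_comp_lift_lsmul_subtype M ha) x).symm

/-- A nonzero annihilator of `𝔪` cannot lie in `𝔪` (its square would vanish), so it is a unit. -/
theorem IsLocalRing.maximalIdeal_eq_bot_of_disjoint_nonZeroDivisors (A : Type*) [CommRing A]
    [IsReduced A] [IsNoetherianRing A] [IsLocalRing A]
    (h : Disjoint (IsLocalRing.maximalIdeal A : Set A) (nonZeroDivisors A)) :
    IsLocalRing.maximalIdeal A = ⊥ := by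
  obtain ⟨x, hx, hx0⟩ :=
    SetLike.exists_of_lt (Ideal.bot_lt_annihilator_of_disjoint_nonZeroDivisors h)
  have hmul : ∀ a ∈ IsLocalRing.maximalIdeal A, x * a = 0 := fun a ha =>
    congrArg Subtype.val (Module.mem_annihilator.mp hx ⟨a, ha⟩)
  have hunit : IsUnit x := by
    by_contra hxm
    exact hx0 (IsReduced.eq_zero x ⟨2, by rw [sq]; exact hmul x hxm⟩)
  refine (Submodule.eq_bot_iff _).mpr fun a ha => ?_
  simpa [hunit.mul_right_eq_zero] using hmul a ha

/-- Let `(A, 𝔪, k)` be a reduced commutative Noetherian local ring and `M` an arbitrary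
`A`-module. If `𝔪 ⊗[A] M` is torsion-free over `A`, then the canonical map
`𝔪 ⊗[A] M → M` induced by the inclusion `𝔪 ⊆ A` (sending `a ⊗ m` to `a • m`)
is injective. -/
theorem maximalIdeal_tensor_torsionFree_implies_injective
    (A : Type*) [CommRing A] [IsReduced A] [IsNoetherianRing A] [IsLocalRing A]
    (M : Type*) [AddCommGroup M] [Module A M]
    (h : Submodule.torsion A ((IsLocalRing.maximalIdeal A) ⊗[A] M) = ⊥) :
    Function.Injective
      (TensorProduct.lift ((LinearMap.lsmul A M).comp
        (Submodule.subtype (IsLocalRing.maximalIdeal A)))) := by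
  rw [← LinearMap.ker_eq_bot, eq_bot_iff]
  intro x hx
  by_cases hdisj : Disjoint (IsLocalRing.maximalIdeal A : Set A) (nonZeroDivisors A)
  · have : Subsingleton (IsLocalRing.maximalIdeal A) := by
      rw [IsLocalRing.maximalIdeal_eq_bot_of_disjoint_nonZeroDivisors A hdisj]
      infer_instance
    exact (Subsingleton.elim x 0).symm ▸ zero_mem _
  · obtain ⟨r, hr, hreg⟩ := Set.not_disjoint_iff.mp hdisj
    rw [← h, Submodule.mem_torsion_iff]
    exact ⟨⟨r, hreg⟩, Ideal.smul_eq_zero_of_lift_lsmul_subtype_eq_zero _ hr hx⟩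
end
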